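/- arXiv:math/0211012 — 7 statements merged into one kernel-verified Lean document; each statement's English description precedes it below -/
import Mathlib

section
/- If f(s) = p(s)/q(s) is a proper rational function with real coefficients, q is Hurwitz stable of degree n, and Re[f(iω)] > 0 for all real ω, then p is Hurwitz stable (and deg p equals n or n−1). -/
open Polynomial

/-- A real polynomial is Hurwitz stable if all of its complex roots have
negative real part. -/
def Hurwitz (p : Polynomial ℝ) : Prop :=
  ∀ z : ℂ, (p.map (algebraMap ℝ ℂ)).IsRoot z → z.re < 0

/-- Evaluation of a real polynomial at the purely imaginary number `i ω`. -/
noncomputable def evalI (p : Polynomial ℝ) (ω : ℝ) : ℂ :=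
  Polynomial.aeval ((ω : ℂ) * Complex.I) p

/-- `c / q` is strictly positive real. -/
def SPR (c q : Polynomial ℝ) : Prop :=
  c.degree = q.degree ∧ Hurwitz q ∧ ∀ ω : ℝ, 0 < (evalI c ω / evalI q ω).re

/-! The rational function `f = p / q` is holomorphic and bounded on the closed right half-plane,
since `q` is Hurwitz and `deg p ≤ deg q`. Phragmén–Lindelöf applied to `exp (-f)` carries
`Re f ≥ 0` from the imaginary axis to the whole closed half-plane, and the maximum modulus
principle makes the inequality strict, so `p` has no zero there. If `r = deg q - deg p ≥ 2`, let
`c` be the ratio of the leading coefficients and `v` an `r`-th root of `-c` with `Re v ≥ 0` (it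
exists because `r ≥ 2`); along the ray `M v` we get `f ≈ c / (M v) ^ r = -1 / M ^ r`, whose real
part is negative. -/

open Complex Filter Topology Bornology Asymptotics

namespace Polynomial

variable {𝕜 : Type*} [NormedField 𝕜]

theorem tendsto_eval_div_eval_mul_pow {P Q : 𝕜[X]} (hQ : Q ≠ 0)
    (h : P.natDegree ≤ Q.natDegree) :
    Tendsto (fun z => P.eval z / Q.eval z * z ^ (Q.natDegree - P.natDegree)) (cobounded 𝕜)
      (𝓝 (P.leadingCoeff / Q.leadingCoeff)) := by
  rcases eq_or_ne P 0 with rfl | hP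
  · simpa using tendsto_const_nhds
  have hc : P.leadingCoeff / Q.leadingCoeff ≠ 0 := by simp [hP, hQ]
  have hequiv := (isEquivalent_cobounded_leading_monomial (P := P)).div
    (isEquivalent_cobounded_leading_monomial (P := Q)) |>.mul
    (IsEquivalent.refl (u := fun z : 𝕜 => z ^ (Q.natDegree - P.natDegree)))
  refine (isEquivalent_const_iff_tendsto hc).mp (hequiv.congr_right ?_)
  filter_upwards [eventually_ne_cobounded 0] with z hz
  have hpow : z ^ Q.natDegree = z ^ P.natDegree * z ^ (Q.natDegree - P.natDegree) := by
    rw [← pow_add, Nat.add_sub_cancel' h]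
  simp only [Pi.mul_apply, Pi.div_apply, Function.const_apply, hpow]
  field_simp

theorem exists_norm_eval_div_eval_le [ProperSpace 𝕜] {P Q : 𝕜[X]} {S : Set 𝕜} (hS : IsClosed S)
    (hQ : ∀ z ∈ S, Q.eval z ≠ 0) (h : P.degree ≤ Q.degree) :
    ∃ B, ∀ z ∈ S, ‖P.eval z / Q.eval z‖ ≤ B := by
  obtain ⟨C, hC0, hC⟩ := (isBigO_cobounded_of_degree_le h).exists_pos
  obtain ⟨R, hR⟩ : ∃ R, ∀ z : 𝕜, R ≤ ‖z‖ → ‖P.eval z‖ ≤ C * ‖Q.eval z‖ := by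
    rw [IsBigOWith, ← comap_norm_atTop, eventually_comap, eventually_atTop] at hC
    obtain ⟨R, hR⟩ := hC
    exact ⟨R, fun z hz => hR ‖z‖ hz z rfl⟩
  have hK : IsCompact (Metric.closedBall 0 R ∩ S) := (isCompact_closedBall 0 R).inter_right hS
  obtain ⟨B, hB⟩ := hK.exists_bound_of_continuousOn <|
    P.continuous.continuousOn.div Q.continuous.continuousOn fun z hz => hQ z hz.2
  refine ⟨max C B, fun z hz => ?_⟩
  rcases le_or_gt R ‖z‖ with hzR | hzR
  · rw [norm_div]
    exact (div_le_of_le_mul₀ (norm_nonneg _) hC0.le (hR z hzR)).trans (le_max_left _ _)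
  · exact (hB z ⟨by simpa using hzR.le, hz⟩).trans (le_max_right _ _)

end Polynomial

namespace Complex

theorem exists_re_nonneg_pow_eq {r : ℕ} (hr : 2 ≤ r) (w : ℂ) : ∃ v : ℂ, 0 ≤ v.re ∧ v ^ r = w := by
  refine ⟨w ^ (r⁻¹ : ℂ), ?_, cpow_nat_inv_pow w (by omega)⟩
  rcases eq_or_ne w 0 with rfl | hw
  · rw [zero_cpow (by simp; omega), zero_re]
  have hr' : (2 : ℝ) ≤ r := by exact_mod_cast hr
  have hlog_im : (log w * (r⁻¹ : ℂ)).im = arg w / r := by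
    rw [← ofReal_natCast, ← ofReal_inv, im_mul_ofReal, log_im, div_eq_mul_inv]
  have harg : |arg w / r| ≤ Real.pi / 2 := by
    rw [abs_div, Nat.abs_cast, div_le_iff₀ (by positivity)]
    nlinarith [abs_arg_le_pi w, Real.pi_pos]
  rw [cpow_def_of_ne_zero hw, exp_re, hlog_im]
  exact mul_nonneg (Real.exp_pos _).le
    (Real.cos_nonneg_of_neg_pi_div_two_le_of_le (abs_le.mp harg).1 (abs_le.mp harg).2)

variable {f : ℂ → ℂ}

theorem re_nonneg_of_re_nonneg_on_imaginary_axis (hd : DiffContOnCl ℂ f {z | 0 < z.re})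
    (hB : ∃ B, ∀ z : ℂ, 0 ≤ z.re → B ≤ (f z).re) (him : ∀ ω : ℝ, 0 ≤ (f (ω * I)).re) {z : ℂ}
    (hz : 0 ≤ z.re) : 0 ≤ (f z).re := by
  obtain ⟨B, hB⟩ := hB
  set g := fun z => exp (-f z)
  have hg : ∀ z, ‖g z‖ = Real.exp (-(f z).re) := fun z => by simp [g, norm_exp]
  have hgB : ∀ z : ℂ, 0 ≤ z.re → ‖g z‖ ≤ Real.exp (-B) := fun z hz => by
    rw [hg, Real.exp_le_exp]; linarith [hB z hz]
  have hPL : ‖g z‖ ≤ 1 := by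
    refine PhragmenLindelof.right_half_plane_of_bounded_on_real
      (differentiable_exp.comp_diffContOnCl hd.neg) ?_ ?_ ?_ hz
    · refine ⟨0, two_pos, 0, IsBigO.of_bound (Real.exp (-B)) ?_⟩
      filter_upwards [mem_inf_of_right (Filter.mem_principal_self _)] with w hw
      simpa using hgB w (le_of_lt hw)
    · exact ⟨Real.exp (-B), eventually_map.2 <| (eventually_ge_atTop 0).mono fun x hx =>
        hgB x (by simpa using hx)⟩
    · intro ω
      rw [hg, Real.exp_le_one_iff, neg_nonpos]
      exact him ω
  rwa [hg, Real.exp_le_one_iff, neg_nonpos] at hPL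

theorem re_pos_of_re_pos_on_imaginary_axis (hd : DiffContOnCl ℂ f {z | 0 < z.re})
    (hB : ∃ B, ∀ z : ℂ, 0 ≤ z.re → B ≤ (f z).re) (him : ∀ ω : ℝ, 0 < (f (ω * I)).re) {z : ℂ}
    (hz : 0 ≤ z.re) : 0 < (f z).re := by
  have hnonneg : ∀ w : ℂ, 0 ≤ w.re → 0 ≤ (f w).re := fun w hw =>
    re_nonneg_of_re_nonneg_on_imaginary_axis hd hB (fun ω => (him ω).le) hw
  rcases hz.eq_or_lt with hz_zero | hz_pos
  · convert him z.im
    apply Complex.ext <;> simp [← hz_zero]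
  refine (hnonneg z hz).lt_of_ne fun hfz => ?_
  set g := fun z => exp (-f z)
  have hg : ∀ z, ‖g z‖ = Real.exp (-(f z).re) := fun z => by simp [g, norm_exp]
  have hmax : IsMaxOn (norm ∘ g) {w : ℂ | 0 < w.re} z := fun w hw => by
    simp only [Set.mem_ofPred_eq, Function.comp_apply, hg, ← hfz, neg_zero, Real.exp_le_exp]
    linarith [hnonneg w (le_of_lt hw)]
  have hconst := norm_eqOn_closure_of_isPreconnected_of_isMaxOn
    (convex_halfSpace_re_gt 0).isPreconnected (isOpen_lt continuous_const continuous_re)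
    (differentiable_exp.comp_diffContOnCl hd.neg) hz_pos hmax
  have h0 : ‖g 0‖ = ‖g z‖ := hconst (by simp [closure_setOfPred_lt_re])
  rw [hg, hg, ← hfz, Real.exp_eq_exp, neg_inj] at h0
  simpa [h0] using him 0

end Complex

namespace Polynomial

theorem natDegree_le_natDegree_add_one_of_re_nonneg {P Q : ℂ[X]} (hP : P ≠ 0)
    (hre : ∀ z : ℂ, 0 ≤ z.re → 0 ≤ (P.eval z / Q.eval z).re) :
    Q.natDegree ≤ P.natDegree + 1 := by
  by_contra! hdeg
  set r := Q.natDegree - P.natDegree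
  have hQ : Q ≠ 0 := by rintro rfl; simp at hdeg
  set c := P.leadingCoeff / Q.leadingCoeff
  have hc : c ≠ 0 := by simp [c, hP, hQ]
  obtain ⟨v, hv_re, hv⟩ := Complex.exists_re_nonneg_pow_eq (r := r) (by omega) (-c)
  have hv0 : v ≠ 0 := by rintro rfl; simp [zero_pow (show r ≠ 0 by omega), hc] at hv
  have hray : Tendsto (fun M : ℝ => (M : ℂ) * v) atTop (cobounded ℂ) :=
    (tendsto_mul_right_cobounded hv0).comp (RCLike.tendsto_ofReal_atTop_cobounded ℂ)
  have hlim : Tendsto (fun M : ℝ => P.eval (M * v) / Q.eval (M * v) * (M : ℂ) ^ r) atTop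
      (𝓝 (c / v ^ r)) := by
    refine ((tendsto_eval_div_eval_mul_pow hQ (by omega)).comp hray |>.div_const (v ^ r)).congr
      fun M => ?_
    simp only [Function.comp_apply, mul_pow]
    field_simp
    ring
  have hlim_re := (continuous_re.tendsto _).comp hlim
  rw [hv, div_neg, div_self hc, neg_re, one_re] at hlim_re
  have hnonneg : ∀ M : ℝ, 0 ≤ M →
      0 ≤ (P.eval (M * v) / Q.eval (M * v) * (M : ℂ) ^ r).re := fun M hM => by
    rw [← ofReal_pow, re_mul_ofReal]
    exact mul_nonneg (hre _ (by simpa using mul_nonneg hM hv_re)) (pow_nonneg hM r)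
  linarith [ge_of_tendsto hlim_re (eventually_atTop.2 ⟨0, hnonneg⟩)]

end Polynomial

theorem Hurwitz.ne_zero {p : ℝ[X]} (hp : Hurwitz p) : p ≠ 0 := by
  rintro rfl
  exact (hp 1 (by simp)).not_ge zero_le_one

theorem stmt_0 (p q : Polynomial ℝ) (n : ℕ)
    (hq : Hurwitz q) (hqd : q.natDegree = n)
    (hproper : p.degree ≤ q.degree)
    (hpos : ∀ ω : ℝ, 0 < (evalI p ω / evalI q ω).re) :
    Hurwitz p ∧ (p.natDegree = n ∨ p.natDegree = n - 1) := by
  set P := p.map (algebraMap ℝ ℂ)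
  set Q := q.map (algebraMap ℝ ℂ)
  set f : ℂ → ℂ := fun z => P.eval z / Q.eval z
  have hQ : ∀ z : ℂ, 0 ≤ z.re → Q.eval z ≠ 0 := fun z hz hQz => (hq z hQz).not_ge hz
  have hd : DiffContOnCl ℂ f {z | 0 < z.re} :=
    DifferentiableOn.diffContOnCl <| P.differentiable.differentiableOn.div
      Q.differentiable.differentiableOn fun z hz => hQ z (by rwa [closure_setOfPred_lt_re] at hz)
  obtain ⟨B, hB⟩ := exists_norm_eval_div_eval_le (P := P)
    (isClosed_le continuous_const continuous_re) hQ (by simpa [P, Q] using hproper)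
  have hf : ∀ z : ℂ, 0 ≤ z.re → 0 < (f z).re := fun z hz =>
    Complex.re_pos_of_re_pos_on_imaginary_axis hd
      ⟨-B, fun w hw => neg_le_of_abs_le ((abs_re_le_norm _).trans (hB w hw))⟩
      (fun ω => by simpa [f, P, Q, evalI, eval_map_algebraMap] using hpos ω) hz
  have hp : Hurwitz p := fun z hz => by
    have hPz : P.eval z = 0 := hz
    by_contra! h
    simpa [f, hPz] using hf z h
  refine ⟨hp, ?_⟩
  have hle : p.natDegree ≤ n := hqd ▸ natDegree_le_natDegree hproper
  have hge : Q.natDegree ≤ P.natDegree + 1 :=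
    natDegree_le_natDegree_add_one_of_re_nonneg (by simpa [P] using hp.ne_zero)
      fun z hz => (hf z hz).le
  simp only [P, Q, natDegree_map] at hge
  omega
end

section
/- If a and b are monic real Hurwitz polynomials of degree n and there exists a real polynomial c such that c/a and c/b are both strictly positive real, then every convex combination λb + (1−λ)a, λ ∈ [0,1], is Hurwitz stable. -/
/-!
Write `p_μ = μ • b + (1 - μ) • a`. Since `Re w⁻¹` and `Re w` have the same sign, the set
`{x | 0 < Re (c(iω) / x)}` is the preimage of the open right half-plane under the real-linear map
`x ↦ x / c(iω)`, hence convex; it contains `a(iω)` and `b(iω)` but not `0`, so no `p_μ`,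
`μ ∈ [0, 1]`, vanishes on the imaginary axis. These `p_μ` are monic of degree `n` with uniformly
bounded roots, and their roots move continuously with `μ`. So the set of `μ ∈ [0, 1]` for which
`p_μ` has a root with `0 ≤ Re z` is closed and, as no root ever lies on the axis, also open. It
misses `μ = 0` because `a` is Hurwitz, so by connectedness it is empty.
-/

open Polynomial

namespace Polynomial

theorem exists_mem_roots_norm_sub_lt_of_norm_eval_lt {K : Type*} [NormedField K] {q : K[X]}
    (hm : q.Monic) (hs : q.Splits) (r : K) {t : ℝ} (ht : 0 ≤ t)
    (h : ‖q.eval r‖ < t ^ q.natDegree) : ∃ z ∈ q.roots, ‖r - z‖ < t := by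
  by_contra! hfar
  have hprod : ‖q.eval r‖ = (q.roots.map fun z => ‖r - z‖).prod := by
    rw [hs.eval_eq_prod_roots_of_monic hm]
    exact (Multiset.prod_hom' _ (normHom : K →*₀ ℝ) _).symm
  have hle := Multiset.prod_map_le_prod_map₀ (fun _ => t) _ (fun _ _ => ht) hfar
  rw [Multiset.map_const', Multiset.prod_replicate, ← hs.natDegree_eq_card_roots] at hle
  exact h.not_ge (hprod ▸ hle)

theorem cauchyBound_map {K L : Type*} [NormedField K] [NormedField L] [NormedAlgebra K L]
    (p : K[X]) : cauchyBound (p.map (algebraMap K L)) = cauchyBound p := by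
  simp only [cauchyBound, natDegree_map, leadingCoeff_map, coeff_map, nnnorm_algebraMap']

theorem Monic.cauchyBound_le {K : Type*} [NormedDivisionRing K] {p : K[X]} (hp : p.Monic)
    {M : NNReal} (h : ∀ i < p.natDegree, ‖p.coeff i‖₊ ≤ M) : cauchyBound p ≤ M + 1 := by
  rw [cauchyBound, hp.leadingCoeff, nnnorm_one, div_one]
  gcongr
  exact Finset.sup_le fun i hi => h i (Finset.mem_range.1 hi)

section SmulAddSmul

variable {R : Type*} [CommSemiring R] {p q : R[X]} {n : ℕ} {s t : R}

theorem natDegree_smul_add_smul_le (hp : p.natDegree ≤ n) (hq : q.natDegree ≤ n) :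
    (s • q + t • p).natDegree ≤ n :=
  (natDegree_add_le _ _).trans
    (max_le ((natDegree_smul_le _ _).trans hq) ((natDegree_smul_le _ _).trans hp))

theorem coeff_smul_add_smul_of_monic (hp : p.Monic) (hq : q.Monic) (hpn : p.natDegree = n)
    (hqn : q.natDegree = n) (hst : s + t = 1) : (s • q + t • p).coeff n = 1 := by
  rw [coeff_add, coeff_smul, coeff_smul, ← hpn, hp.coeff_natDegree, hpn, ← hqn,
    hq.coeff_natDegree, smul_eq_mul, smul_eq_mul, mul_one, mul_one, hst]

theorem Monic.smul_add_smul (hp : p.Monic) (hq : q.Monic) (hpn : p.natDegree = n)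
    (hqn : q.natDegree = n) (hst : s + t = 1) : (s • q + t • p).Monic :=
  monic_of_natDegree_le_of_coeff_eq_one n (natDegree_smul_add_smul_le hpn.le hqn.le)
    (coeff_smul_add_smul_of_monic hp hq hpn hqn hst)

theorem Monic.natDegree_smul_add_smul [Nontrivial R] (hp : p.Monic) (hq : q.Monic)
    (hpn : p.natDegree = n) (hqn : q.natDegree = n) (hst : s + t = 1) :
    (s • q + t • p).natDegree = n :=
  natDegree_eq_of_le_of_coeff_ne_zero (natDegree_smul_add_smul_le hpn.le hqn.le)
    (by rw [coeff_smul_add_smul_of_monic hp hq hpn hqn hst]; exact one_ne_zero)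

end SmulAddSmul

end Polynomial

theorem isOpen_setOf_exists_isRoot_mem {X : Type*} [TopologicalSpace X] {P : X → ℂ[X]} {n : ℕ}
    (hmon : ∀ x, (P x).Monic) (hdeg : ∀ x, (P x).natDegree = n)
    (hP : ∀ z, Continuous fun x => (P x).eval z) {U : Set ℂ} (hU : IsOpen U) :
    IsOpen {x | ∃ z ∈ U, (P x).IsRoot z} := by
  refine isOpen_iff_mem_nhds.2 fun x₀ ⟨r, hrU, hr⟩ => ?_
  obtain ⟨t, ht, hball⟩ := Metric.isOpen_iff.1 hU r hrU
  have hsmall : ∀ᶠ x in nhds x₀, ‖(P x).eval r‖ < t ^ n :=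
    (hP r).norm.continuousAt.eventually_lt continuousAt_const
      (by rw [hr.eq_zero, norm_zero]; positivity)
  filter_upwards [hsmall] with x hx
  obtain ⟨z, hz, hrz⟩ := exists_mem_roots_norm_sub_lt_of_norm_eval_lt (hmon x)
    (IsAlgClosed.splits _) r ht.le (by rwa [hdeg])
  exact ⟨z, hball (by rwa [Metric.mem_ball, dist_comm, dist_eq_norm]), isRoot_of_mem_roots hz⟩

theorem isClosed_setOf_exists_isRoot_mem {X : Type*} [TopologicalSpace X] [CompactSpace X]
    [T2Space X] {P : X → ℂ[X]} (hP : Continuous fun p : X × ℂ => (P p.1).eval p.2) {R : ℝ}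
    (hR : ∀ x z, (P x).IsRoot z → ‖z‖ ≤ R) {F : Set ℂ} (hF : IsClosed F) :
    IsClosed {x | ∃ z ∈ F, (P x).IsRoot z} := by
  set S := {p : X × ℂ | p.2 ∈ F ∧ (P p.1).eval p.2 = 0}
  have hS : IsCompact S := by
    refine (isCompact_univ.prod (isCompact_closedBall 0 R)).of_isClosed_subset
      ((hF.preimage continuous_snd).inter (isClosed_eq hP continuous_const)) ?_
    rintro ⟨x, z⟩ ⟨-, hz⟩
    exact ⟨trivial, mem_closedBall_zero_iff.2 (hR x z hz)⟩
  convert (hS.image continuous_fst).isClosed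
  ext x
  simp [S, IsRoot]

theorem forall_re_neg_of_isRoot_of_re_ne_zero {X : Type*} [TopologicalSpace X] [CompactSpace X]
    [T2Space X] [PreconnectedSpace X] {P : X → ℂ[X]} {n : ℕ}
    (hmon : ∀ x, (P x).Monic) (hdeg : ∀ x, (P x).natDegree = n)
    (hP : Continuous fun p : X × ℂ => (P p.1).eval p.2) {R : ℝ}
    (hR : ∀ x z, (P x).IsRoot z → ‖z‖ ≤ R) (haxis : ∀ x z, (P x).IsRoot z → z.re ≠ 0)
    {x₀ : X} (h₀ : ∀ z, (P x₀).IsRoot z → z.re < 0) (x : X) {z : ℂ} (hz : (P x).IsRoot z) :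
    z.re < 0 := by
  set U := {x | ∃ z ∈ {z : ℂ | 0 ≤ z.re}, (P x).IsRoot z}
  have hU_closed : IsClosed U :=
    isClosed_setOf_exists_isRoot_mem hP hR (isClosed_le continuous_const Complex.continuous_re)
  have hU_eq : U = {x | ∃ z ∈ {z : ℂ | 0 < z.re}, (P x).IsRoot z} := by
    ext x
    exact exists_congr fun z => and_congr_left fun hz => (haxis x z hz).symm.le_iff_lt
  have hU_open : IsOpen U := hU_eq ▸ isOpen_setOf_exists_isRoot_mem hmon hdeg
    (fun z => hP.comp (continuous_id.prodMk continuous_const))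
    (isOpen_lt continuous_const Complex.continuous_re)
  have hx₀ : x₀ ∉ U := fun ⟨z, hz, hroot⟩ => (h₀ z hroot).not_ge hz
  have hU : U = ∅ := (isClopen_iff.1 ⟨hU_closed, hU_open⟩).resolve_right
    fun h => hx₀ (h ▸ Set.mem_univ x₀)
  exact not_le.1 fun hre => Set.eq_empty_iff_forall_notMem.1 hU x ⟨z, hre, hz⟩

theorem Complex.inv_re_pos {z : ℂ} : 0 < z⁻¹.re ↔ 0 < z.re := by
  rcases eq_or_ne z 0 with rfl | hz
  · simp
  · rw [Complex.inv_re, div_pos_iff_of_pos_right (Complex.normSq_pos.2 hz)]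

theorem Complex.convex_setOf_re_div_pos (w : ℂ) : Convex ℝ {x : ℂ | 0 < (w / x).re} := by
  have : {x : ℂ | 0 < (w / x).re} = LinearMap.mulRight ℝ w⁻¹ ⁻¹' {z | 0 < z.re} := by
    ext x
    rw [Set.mem_ofPred_eq, ← Complex.inv_re_pos, inv_div, div_eq_mul_inv]
    rfl
  exact this ▸ (convex_halfSpace_re_gt 0).linear_preimage _

theorem evalI_smul_add_smul_ne_zero {a b c : ℝ[X]} (hca : ∀ ω, 0 < (evalI c ω / evalI a ω).re)
    (hcb : ∀ ω, 0 < (evalI c ω / evalI b ω).re) {μ : ℝ} (hμ : μ ∈ Set.Icc (0 : ℝ) 1) (ω : ℝ) :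
    evalI (μ • b + (1 - μ) • a) ω ≠ 0 := by
  have hmem := Complex.convex_setOf_re_div_pos (evalI c ω) (hcb ω) (hca ω) hμ.1
    (sub_nonneg.2 hμ.2) (add_sub_cancel μ 1)
  intro h
  simp only [evalI, map_add, map_smul] at h hmem
  rw [Set.mem_ofPred_eq, h, div_zero, Complex.zero_re] at hmem
  exact hmem.false

theorem norm_le_of_isRoot_map_smul_add_smul {a b : ℝ[X]} {n : ℕ} (haM : a.Monic) (hbM : b.Monic)
    (hna : a.natDegree = n) (hnb : b.natDegree = n) {μ : ℝ} (hμ : μ ∈ Set.Icc (0 : ℝ) 1) {z : ℂ}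
    (hz : ((μ • b + (1 - μ) • a).map (algebraMap ℝ ℂ)).IsRoot z) :
    ‖z‖ ≤ ∑ i ∈ Finset.range n, (‖a.coeff i‖ + ‖b.coeff i‖) + 1 := by
  have hp := haM.smul_add_smul hbM hna hnb (add_sub_cancel μ 1)
  have hpn := haM.natDegree_smul_add_smul hbM hna hnb (add_sub_cancel μ 1)
  have hcoeff (i : ℕ) : ‖(μ • b + (1 - μ) • a).coeff i‖ ≤ ‖a.coeff i‖ + ‖b.coeff i‖ := by
    rw [coeff_add, coeff_smul, coeff_smul]
    refine (norm_add_le _ _).trans ?_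
    rw [norm_smul, norm_smul, Real.norm_of_nonneg hμ.1, Real.norm_of_nonneg (sub_nonneg.2 hμ.2)]
    nlinarith [norm_nonneg (a.coeff i), norm_nonneg (b.coeff i), hμ.1, hμ.2]
  have hbound : cauchyBound (μ • b + (1 - μ) • a) ≤
      ∑ i ∈ Finset.range n, (‖a.coeff i‖₊ + ‖b.coeff i‖₊) + 1 := by
    refine hp.cauchyBound_le fun i hi => ?_
    rw [hpn] at hi
    refine le_trans ?_ (Finset.single_le_sum (f := fun i => ‖a.coeff i‖₊ + ‖b.coeff i‖₊)
      (fun _ _ => zero_le) (Finset.mem_range.2 hi))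
    exact_mod_cast hcoeff i
  have hlt := hz.norm_lt_cauchyBound (hp.map _).ne_zero
  rw [cauchyBound_map] at hlt
  simpa using NNReal.coe_le_coe.2 (hlt.le.trans hbound)

theorem aeval_eq_evalI_im (p : ℝ[X]) {z : ℂ} (hz : z.re = 0) : aeval z p = evalI p z.im := by
  rw [evalI]
  congr
  conv_lhs => rw [← Complex.re_add_im z, hz]
  simp

theorem stmt_2_general (n : ℕ) (a b : Polynomial ℝ)
    (haM : a.Monic) (hbM : b.Monic)
    (hna : a.natDegree = n) (hnb : b.natDegree = n)
    (haH : Hurwitz a)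
    (hex : ∃ c : Polynomial ℝ, SPR c a ∧ SPR c b) :
    ∀ μ : ℝ, μ ∈ Set.Icc (0 : ℝ) 1 → Hurwitz (μ • b + (1 - μ) • a) := by
  obtain ⟨c, ⟨-, -, hca⟩, ⟨-, -, hcb⟩⟩ := hex
  let P (ν : Set.Icc (0 : ℝ) 1) : ℂ[X] := ((ν : ℝ) • b + (1 - (ν : ℝ)) • a).map (algebraMap ℝ ℂ)
  have hsum (ν : ℝ) : ν + (1 - ν) = 1 := add_sub_cancel ν 1
  have hmon (ν) : (P ν).Monic := (haM.smul_add_smul hbM hna hnb (hsum ν)).map _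
  have hdeg (ν) : (P ν).natDegree = n := by
    rw [natDegree_map, haM.natDegree_smul_add_smul hbM hna hnb (hsum ν)]
  have hP : Continuous fun p : Set.Icc (0 : ℝ) 1 × ℂ => (P p.1).eval p.2 := by
    simp only [P, eval_map_algebraMap, map_add, map_smul]
    fun_prop
  have hbound (ν) (z : ℂ) (hz : (P ν).IsRoot z) :
      ‖z‖ ≤ ∑ i ∈ Finset.range n, (‖a.coeff i‖ + ‖b.coeff i‖) + 1 :=
    norm_le_of_isRoot_map_smul_add_smul haM hbM hna hnb ν.2 hz
  have haxis (ν) (z : ℂ) (hz : (P ν).IsRoot z) : z.re ≠ 0 := fun hre =>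
    evalI_smul_add_smul_ne_zero hca hcb ν.2 z.im
      (by rwa [IsRoot.def, eval_map_algebraMap, aeval_eq_evalI_im _ hre] at hz)
  have h₀ : ∀ z, (P ⟨0, by simp⟩).IsRoot z → z.re < 0 := by simpa [P, Hurwitz] using haH
  exact fun μ hμ z hz =>
    forall_re_neg_of_isRoot_of_re_ne_zero hmon hdeg hP hbound haxis h₀ ⟨μ, hμ⟩ hz

theorem stmt_2 (n : ℕ) (a b : Polynomial ℝ)
    (haM : a.Monic) (hbM : b.Monic)
    (hna : a.natDegree = n) (hnb : b.natDegree = n)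
    (haH : Hurwitz a) (hbH : Hurwitz b)
    (hex : ∃ c : Polynomial ℝ, SPR c a ∧ SPR c b) :
    ∀ μ : ℝ, μ ∈ Set.Icc (0 : ℝ) 1 → Hurwitz (μ • b + (1 - μ) • a) :=
  stmt_2_general n a b haM hbM hna hnb haH hex
end

section
/- For any two monic real Hurwitz polynomials a(s) = s² + a₁s + a₂ and b(s) = s² + b₁s + b₂ of degree 2, there exists a real polynomial c of degree 2 such that c/a and c/b are both strictly positive real. -/
/-!
A monic Hurwitz quadratic `s² + p s + q` has `p, q > 0`. For `c = s² + γ s + 1` one computes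
`Re[c(iω) · conj q(iω)] = ω⁴ + (γ p - 1 - q) ω² + q`, which is positive for every `ω` as soon as
`γ ≥ (1 + q) / p`. Taking `γ = (1 + a₂) / a₁ + (1 + b₂) / b₁` serves both denominators at once.
-/

open Polynomial

theorem Complex.re_div_pos_of_re_mul_add_im_mul_pos {z w : ℂ}
    (h : 0 < z.re * w.re + z.im * w.im) : 0 < (z / w).re := by
  have hw : w ≠ 0 := by
    rintro rfl
    simp at h
  rw [Complex.div_re, ← add_div]
  exact div_pos h (Complex.normSq_pos.mpr hw)

section Quadratic

variable (p q : ℝ)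

theorem degree_monic_quadratic : (X ^ 2 + C p * X + C q).degree = 2 := by
  simpa using degree_quadratic (R := ℝ) one_ne_zero (b := p) (c := q)

theorem isRoot_map_monic_quadratic_iff (z : ℂ) :
    ((X ^ 2 + C p * X + C q).map (algebraMap ℝ ℂ)).IsRoot z ↔ z ^ 2 + p * z + q = 0 := by
  simp [IsRoot]

theorem evalI_monic_quadratic (ω : ℝ) :
    evalI (X ^ 2 + C p * X + C q) ω = ⟨q - ω ^ 2, p * ω⟩ := by
  simp only [evalI, pow_two, map_add, map_mul, aeval_X, aeval_C, Complex.coe_algebraMap,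
    Complex.ext_iff, Complex.add_re, Complex.mul_re, Complex.ofReal_re, Complex.I_re, mul_zero,
    Complex.ofReal_im, Complex.I_im, mul_one, sub_self, Complex.mul_im, add_zero, zero_sub,
    zero_mul, Complex.add_im, zero_add, and_true]
  ring

variable {p q}

theorem Hurwitz.coeff_pos_of_monic_quadratic (h : Hurwitz (X ^ 2 + C p * X + C q)) :
    0 < p ∧ 0 < q := by
  have hdeg : 0 < ((X ^ 2 + C p * X + C q).map (algebraMap ℝ ℂ)).degree := by
    rw [degree_map, degree_monic_quadratic]
    norm_num
  obtain ⟨z, hz⟩ := Complex.exists_root hdeg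
  rw [isRoot_map_monic_quadratic_iff] at hz
  -- Vieta: the other root is `-p - z`.
  have hz' : (-p - z) ^ 2 + p * (-p - z) + q = 0 := by linear_combination hz
  have hz_re : z.re < 0 := h z ((isRoot_map_monic_quadratic_iff p q z).mpr hz)
  have hz'_re : (-p - z).re < 0 := h _ ((isRoot_map_monic_quadratic_iff p q _).mpr hz')
  have h_re := congrArg Complex.re hz
  have h_im := congrArg Complex.im hz
  simp only [Complex.add_re, Complex.add_im, Complex.mul_re, Complex.mul_im, pow_two,
    Complex.ofReal_re, Complex.ofReal_im, Complex.zero_re, Complex.zero_im] at h_re h_im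
  simp only [Complex.sub_re, Complex.neg_re, Complex.ofReal_re] at hz'_re
  refine ⟨by linarith, ?_⟩
  -- Either both roots are real, or they are conjugate with `p = -2 Re z`.
  rcases mul_eq_zero.mp (show z.im * (2 * z.re + p) = 0 by linarith) with h_real | h_conj
  · nlinarith
  · nlinarith

theorem spr_monic_quadratic_of_div_le {γ : ℝ} (h : Hurwitz (X ^ 2 + C p * X + C q))
    (hγ : (1 + q) / p ≤ γ) : SPR (X ^ 2 + C γ * X + C 1) (X ^ 2 + C p * X + C q) := by
  obtain ⟨hp, hq⟩ := h.coeff_pos_of_monic_quadratic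
  rw [div_le_iff₀ hp] at hγ
  refine ⟨by rw [degree_monic_quadratic, degree_monic_quadratic], h, fun ω => ?_⟩
  apply Complex.re_div_pos_of_re_mul_add_im_mul_pos
  rw [evalI_monic_quadratic, evalI_monic_quadratic]
  -- The expression equals `ω⁴ + (γ p - 1 - q) ω² + q`.
  nlinarith [sq_nonneg ω, sq_nonneg (ω ^ 2)]

end Quadratic

theorem stmt_3 (a₁ a₂ b₁ b₂ : ℝ)
    (ha : Hurwitz (X ^ 2 + C a₁ * X + C a₂))
    (hb : Hurwitz (X ^ 2 + C b₁ * X + C b₂)) :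
    ∃ c : Polynomial ℝ, c.degree = 2 ∧
      SPR c (X ^ 2 + C a₁ * X + C a₂) ∧ SPR c (X ^ 2 + C b₁ * X + C b₂) := by
  obtain ⟨ha₁, ha₂⟩ := ha.coeff_pos_of_monic_quadratic
  obtain ⟨hb₁, hb₂⟩ := hb.coeff_pos_of_monic_quadratic
  set γ := (1 + a₂) / a₁ + (1 + b₂) / b₁
  have hγa : (1 + a₂) / a₁ ≤ γ := le_add_of_nonneg_right (by positivity)
  have hγb : (1 + b₂) / b₁ ≤ γ := le_add_of_nonneg_left (by positivity)
  exact ⟨X ^ 2 + C γ * X + C 1, degree_monic_quadratic γ 1,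
    spr_monic_quadratic_of_div_le ha hγa, spr_monic_quadratic_of_div_le hb hγb⟩
end

section
/- Let a be a monic real Hurwitz polynomial of degree n and c(s) = s^{n-1} + x₁s^{n-2} + ⋯ + x_{n-1} a monic real polynomial of degree n−1. Then Re[c(iω)/a(iω)] = g(ω²)/|a(iω)|², where g(t) = c₁t^{n-1} + c₂t^{n-2} + ⋯ + c_n with c_l = Σ_{j} (−1)^{l+j} a_j x_{2l−j−1} (conventions a₀ = 1, x₀ = 1, a_i = 0 for i < 0 or i > n, x_i = 0 for i < 0 or i > n−1). -/
open Polynomial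

/-- The coordinate `x_m` (coefficient of `s^{n-1-m}` in `c`), with the
convention that out-of-range indices give `0` and `x₀ = 1` for monic `c`. -/
noncomputable def xcoef (n : ℕ) (c : Polynomial ℝ) (m : ℤ) : ℝ :=
  if 0 ≤ m ∧ m ≤ (n : ℤ) - 1 then c.coeff (n - 1 - m.toNat) else 0

/-! Since `a` has real coefficients, `conj (a(iω)) = a(-iω)`, so
`c(iω) · conj (a(iω)) = ∑ c_k a_m (-1)^m (iω)^(k+m)`. Only the terms with `k + m = 2s` even
are real, and they contribute `(-1)^(m+s) c_k a_m ω^(2s)`. Substituting `j = n - m`,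
`l = n - s` turns `c_k` into `x_(2l-j-1)` and collects these terms into `c_l (ω²)^(n-l)`. -/

open ComplexConjugate

namespace Complex

lemma re_I_pow_two_mul (s : ℕ) : (I ^ (2 * s)).re = (-1) ^ s := by
  rw [pow_mul, I_sq, ← ofReal_one, ← ofReal_neg, ← ofReal_pow, ofReal_re]

lemma re_I_pow_of_odd {t : ℕ} (ht : Odd t) : (I ^ t).re = 0 := by
  obtain ⟨s, rfl⟩ := ht
  rw [pow_succ, mul_I_re, pow_mul, I_sq, ← ofReal_one, ← ofReal_neg, ← ofReal_pow, ofReal_im,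
    neg_zero]

lemma div_re_eq_mul_conj_re (z w : ℂ) : (z / w).re = (z * conj w).re / ‖w‖ ^ 2 := by
  rw [div_eq_mul_inv, inv_def, ← mul_assoc, re_mul_ofReal, normSq_eq_norm_sq, div_eq_mul_inv]

end Complex

open Complex

lemma conj_evalI (p : ℝ[X]) (ω : ℝ) : conj (evalI p ω) = evalI p (-ω) := by
  rw [evalI, evalI, ← conjAe_coe, ← aeval_algHom_apply]
  simp

lemma evalI_eq_sum_range {p : ℝ[X]} {N : ℕ} (hp : p.natDegree < N) (ω : ℝ) :
    evalI p ω = ∑ k ∈ Finset.range N, (p.coeff k : ℂ) * (ω * I) ^ k := by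
  simp [evalI, aeval_eq_sum_range' hp, Complex.real_smul]

lemma re_evalI_mul_conj {p q : ℝ[X]} {N M : ℕ} (hp : p.natDegree < N) (hq : q.natDegree < M)
    (ω : ℝ) :
    (evalI p ω * conj (evalI q ω)).re = ∑ k ∈ Finset.range N, ∑ m ∈ Finset.range M,
      p.coeff k * q.coeff m * ((-1) ^ m * ω ^ (k + m) * (I ^ (k + m)).re) := by
  rw [conj_evalI, evalI_eq_sum_range hp, evalI_eq_sum_range hq, Finset.sum_mul_sum, re_sum]
  refine Finset.sum_congr rfl fun k _ => ?_
  rw [re_sum]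
  refine Finset.sum_congr rfl fun m _ => ?_
  have : (p.coeff k : ℂ) * (ω * I) ^ k * ((q.coeff m : ℂ) * ((-ω : ℝ) * I) ^ m) =
      ((p.coeff k * q.coeff m * ((-1) ^ m * ω ^ (k + m)) : ℝ) : ℂ) * I ^ (k + m) := by
    push_cast
    ring
  rw [this, re_ofReal_mul, mul_assoc]

lemma xcoef_sub_one_sub {n k : ℕ} (hk : k < n) (c : ℝ[X]) :
    xcoef n c ((n : ℤ) - 1 - k) = c.coeff k := by
  rw [xcoef, if_pos (by omega)]
  congr 1
  omega

lemma sum_coeff_mul_re_eq_sum_xcoef {n m : ℕ} (hm : m ≤ n) (c : ℝ[X]) (ω : ℝ) :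
    ∑ k ∈ Finset.range n, c.coeff k * ((-1) ^ m * ω ^ (k + m) * (I ^ (k + m)).re) =
      ∑ l ∈ Finset.Icc 1 n, (-1) ^ (l + (n - m)) *
        xcoef n c (2 * (l : ℤ) - ((n - m : ℕ) : ℤ) - 1) * (ω ^ 2) ^ (n - l) := by
  have hodd (k : ℕ) (_ : k ∈ Finset.range n)
      (hk : c.coeff k * ((-1) ^ m * ω ^ (k + m) * (I ^ (k + m)).re) ≠ 0) : Even (k + m) := by
    by_contra h
    rw [re_I_pow_of_odd (Nat.not_even_iff_odd.mp h), mul_zero, mul_zero] at hk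
    exact hk rfl
  have hout (l : ℕ) (_ : l ∈ Finset.Icc 1 n)
      (hl : (-1) ^ (l + (n - m)) * xcoef n c (2 * (l : ℤ) - ((n - m : ℕ) : ℤ) - 1) *
        (ω ^ 2) ^ (n - l) ≠ 0) : n + 1 ≤ 2 * l + m ∧ 2 * l + m ≤ 2 * n := by
    by_contra h
    rw [xcoef, if_neg (by omega), mul_zero, zero_mul] at hl
    exact hl rfl
  rw [← Finset.sum_filter_of_ne hodd, ← Finset.sum_filter_of_ne hout]
  refine (Finset.sum_nbij' (fun l => 2 * n - 2 * l - m) (fun k => n - (k + m) / 2)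
    ?_ ?_ ?_ ?_ ?_).symm
  all_goals simp only [Finset.mem_filter, Finset.mem_range, Finset.mem_Icc, Nat.even_iff]
  · omega
  · omega
  · omega
  · omega
  rintro l ⟨-, hl⟩
  have hk : 2 * n - 2 * l - m + m = 2 * (n - l) := by omega
  have hx : 2 * (l : ℤ) - ((n - m : ℕ) : ℤ) - 1 =
      (n : ℤ) - 1 - ((2 * n - 2 * l - m : ℕ) : ℤ) := by
    omega
  have hsign : (-1 : ℝ) ^ (l + (n - m)) = (-1) ^ (m + (n - l)) :=
    neg_one_pow_congr (by simp only [Nat.even_iff]; omega)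
  rw [hk, re_I_pow_two_mul, pow_mul, hx, xcoef_sub_one_sub (by omega), hsign, pow_add]
  ring

theorem stmt_5_general (n : ℕ) (hn : 1 ≤ n) (a c : Polynomial ℝ)
    (had : a.natDegree = n)
    (hcd : c.natDegree = n - 1) :
    ∀ ω : ℝ,
      (evalI c ω / evalI a ω).re =
        (∑ l ∈ Finset.Icc 1 n,
            (∑ j ∈ Finset.range (n + 1),
              (-1 : ℝ) ^ (l + j) * a.coeff (n - j) *
                xcoef n c (2 * (l : ℤ) - (j : ℤ) - 1)) * (ω ^ 2) ^ (n - l))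
          / ‖evalI a ω‖ ^ 2 := by
  intro ω
  rw [div_re_eq_mul_conj_re, re_evalI_mul_conj (N := n) (M := n + 1) (by omega) (by omega)]
  congr 1
  calc _ = ∑ m ∈ Finset.range (n + 1), a.coeff m * ∑ k ∈ Finset.range n,
        c.coeff k * ((-1) ^ m * ω ^ (k + m) * (I ^ (k + m)).re) := by
        rw [Finset.sum_comm]
        simp only [Finset.mul_sum]
        exact Finset.sum_congr rfl fun _ _ => Finset.sum_congr rfl fun _ _ => by ring
    _ = ∑ m ∈ Finset.range (n + 1), a.coeff m * ∑ l ∈ Finset.Icc 1 n, (-1) ^ (l + (n - m)) *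
        xcoef n c (2 * (l : ℤ) - ((n - m : ℕ) : ℤ) - 1) * (ω ^ 2) ^ (n - l) :=
        Finset.sum_congr rfl fun m hm =>
          by rw [sum_coeff_mul_re_eq_sum_xcoef (Nat.lt_succ_iff.mp (Finset.mem_range.mp hm))]
    _ = _ := by
        rw [← Finset.sum_range_reflect]
        simp only [Finset.mul_sum, Finset.sum_mul]
        rw [Finset.sum_comm]
        refine Finset.sum_congr rfl fun l _ => Finset.sum_congr rfl fun j hj => ?_
        rw [Nat.add_sub_cancel, Nat.sub_sub_self (Nat.lt_succ_iff.mp (Finset.mem_range.mp hj))]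
        ring

theorem stmt_5 (n : ℕ) (hn : 1 ≤ n) (a c : Polynomial ℝ)
    (haM : a.Monic) (had : a.natDegree = n) (haH : Hurwitz a)
    (hcM : c.Monic) (hcd : c.natDegree = n - 1) :
    ∀ ω : ℝ,
      (evalI c ω / evalI a ω).re =
        (∑ l ∈ Finset.Icc 1 n,
            (∑ j ∈ Finset.range (n + 1),
              (-1 : ℝ) ^ (l + j) * a.coeff (n - j) *
                xcoef n c (2 * (l : ℤ) - (j : ℤ) - 1)) * (ω ^ 2) ^ (n - l))
          / ‖evalI a ω‖ ^ 2 :=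
  stmt_5_general n hn a c had hcd
end

section
/- Let a, b be monic real Hurwitz polynomials of degree n and c(s) = s^{n-1} + x₁s^{n-2} + ⋯ + x_{n-1}. Suppose Re[c(iω)/a(iω)] > 0 and Re[c(iω)/b(iω)] > 0 for all real ω. Then for every monic real polynomial h of degree n there exists δ₀ > 0 such that for all δ ∈ (0, δ₀), the polynomial c̃(s) = c(s) + δ·h(s) makes c̃/a and c̃/b both strictly positive real. -/
open Polynomial

/-! For monic `h` and `q` of the same degree, `h(iω) / q(iω) → 1` as `|ω| → ∞`, so
`g = Re (h / q)` is positive off a compact set. With `f = Re (c / q) > 0`, the ratio `g / f` is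
therefore bounded below, and `Re ((c + δ h) / q) = f + δ g = f (1 + δ g / f)` stays positive for
all small `δ > 0`. Since `deg c < n`, the numerator `c + δ h` has degree `n`. -/

open Filter Topology Bornology Asymptotics

theorem Polynomial.Monic.isEquivalent_cobounded {R : Type*} [NormedRing R] [NormMulClass R]
    {P Q : R[X]} (hP : P.Monic) (hQ : Q.Monic) (h : P.natDegree = Q.natDegree) :
    P.eval ~[cobounded R] Q.eval := by
  have hP' := P.isEquivalent_cobounded_leading_monomial
  have hQ' := Q.isEquivalent_cobounded_leading_monomial
  rw [hP.leadingCoeff, h] at hP'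
  rw [hQ.leadingCoeff] at hQ'
  exact hP'.trans hQ'.symm

theorem eventually_nhdsGT_forall_pos_add_mul {X : Type*} [TopologicalSpace X] {f g : X → ℝ}
    (hf : Continuous f) (hg : Continuous g) (hf0 : ∀ x, 0 < f x)
    (hg0 : ∀ᶠ x in cocompact X, 0 ≤ g x) :
    ∀ᶠ δ in 𝓝[>] (0 : ℝ), ∀ x, 0 < f x + δ * g x := by
  rcases isEmpty_or_nonempty X with hX | ⟨⟨x₀⟩⟩
  · exact .of_forall fun _ x => isEmptyElim x
  -- `min (g / f) 0` attains its minimum since it vanishes outside a compact set.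
  set u : X → ℝ := fun x => min (g x / f x) 0
  have hu : Continuous u := (hg.div hf fun x => (hf0 x).ne').min continuous_const
  obtain ⟨x₁, hx₁⟩ := hu.exists_forall_le' x₀ <| hg0.mono fun x hx =>
    (min_le_right _ _).trans (le_min (div_nonneg hx (hf0 x).le) le_rfl)
  have hsmall : ∀ᶠ δ in 𝓝 (0 : ℝ), -1 < δ * u x₁ :=
    ((continuous_mul_const (u x₁)).tendsto' 0 0 (zero_mul _)).eventually
      (Ioi_mem_nhds (by norm_num))
  filter_upwards [nhdsWithin_le_nhds hsmall, self_mem_nhdsWithin] with δ hδ (hδ0 : 0 < δ) x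
  calc 0 < f x * (1 + δ * u x₁) := mul_pos (hf0 x) (by linarith)
    _ ≤ f x * (1 + δ * (g x / f x)) := by
        gcongr
        · exact (hf0 x).le
        · exact (hx₁ x).trans (min_le_left _ _)
    _ = f x + δ * g x := by field_simp [(hf0 x).ne']

lemma evalI_eq_eval_map (p : ℝ[X]) (ω : ℝ) :
    evalI p ω = (p.map (algebraMap ℝ ℂ)).eval ((ω : ℂ) * Complex.I) := by
  rw [evalI, aeval_def, eval_map]

lemma evalI_add_smul (c h : ℝ[X]) (δ ω : ℝ) :
    evalI (c + δ • h) ω = evalI c ω + δ * evalI h ω := by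
  simp only [evalI, map_add, map_smul, Complex.real_smul]

lemma continuous_evalI (p : ℝ[X]) : Continuous (evalI p) :=
  (p.continuous_aeval).comp (Complex.continuous_ofReal.mul continuous_const)

lemma Hurwitz.evalI_ne_zero {q : ℝ[X]} (hq : Hurwitz q) (ω : ℝ) : evalI q ω ≠ 0 := by
  intro h0
  have := hq _ (by rwa [IsRoot, ← evalI_eq_eval_map])
  simp at this

lemma tendsto_ofReal_mul_I_cocompact :
    Tendsto (fun ω : ℝ => (ω : ℂ) * Complex.I) (cocompact ℝ) (cobounded ℂ) := by
  rw [← tendsto_norm_atTop_iff_cobounded]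
  exact tendsto_norm_cocompact_atTop.congr fun ω => by simp

lemma isEquivalent_evalI {p q : ℝ[X]} (hp : p.Monic) (hq : q.Monic)
    (h : p.natDegree = q.natDegree) : evalI p ~[cocompact ℝ] evalI q := by
  simp only [funext (evalI_eq_eval_map _)]
  exact ((hp.map _).isEquivalent_cobounded (hq.map _)
    (by simpa only [natDegree_map] using h)).comp_tendsto tendsto_ofReal_mul_I_cocompact

lemma eventually_re_evalI_div_pos {h q : ℝ[X]} (hh : h.Monic) (hq : q.Monic)
    (hd : h.natDegree = q.natDegree) (hqH : Hurwitz q) :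
    ∀ᶠ ω in cocompact ℝ, 0 < (evalI h ω / evalI q ω).re := by
  have hlim := (isEquivalent_iff_tendsto_one (.of_forall hqH.evalI_ne_zero)).mp
    (isEquivalent_evalI hh hq hd)
  exact (Complex.continuous_re.tendsto 1 |>.comp hlim).eventually (lt_mem_nhds (by simp))

lemma eventually_SPR_add_smul {c h q : ℝ[X]} (hh : h.Monic) (hq : q.Monic)
    (hd : h.natDegree = q.natDegree) (hc : c.degree < q.degree) (hqH : Hurwitz q)
    (hpos : ∀ ω, 0 < (evalI c ω / evalI q ω).re) :
    ∀ᶠ δ in 𝓝[>] (0 : ℝ), SPR (c + δ • h) q := by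
  have hre : ∀ (δ ω : ℝ), ((evalI c ω + δ * evalI h ω) / evalI q ω).re =
      (evalI c ω / evalI q ω).re + δ * (evalI h ω / evalI q ω).re := fun δ ω => by
    rw [add_div, Complex.add_re, mul_div_assoc, Complex.re_ofReal_mul]
  have hcont (p : ℝ[X]) : Continuous fun ω => (evalI p ω / evalI q ω).re :=
    Complex.continuous_re.comp
      ((continuous_evalI p).div (continuous_evalI q) hqH.evalI_ne_zero)
  filter_upwards [eventually_nhdsGT_forall_pos_add_mul (hcont c) (hcont h) hpos
    ((eventually_re_evalI_div_pos hh hq hd hqH).mono fun _ => le_of_lt),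
    self_mem_nhdsWithin] with δ hδ (hδ0 : 0 < δ)
  have hhq : h.degree = q.degree := by
    rw [degree_eq_natDegree hh.ne_zero, degree_eq_natDegree hq.ne_zero, hd]
  have hδh : (δ • h).degree = q.degree := by
    rw [degree_smul_of_smul_regular _ (IsSMulRegular.of_ne_zero hδ0.ne'), hhq]
  refine ⟨?_, hqH, fun ω => ?_⟩
  · rwa [degree_add_eq_right_of_degree_lt (hδh ▸ hc)]
  · rw [evalI_add_smul, hre]
    exact hδ ω

theorem stmt_6_general (n : ℕ) (hn : 1 ≤ n) (a b c h : Polynomial ℝ)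
    (haM : a.Monic) (hbM : b.Monic)
    (hna : a.natDegree = n) (hnb : b.natDegree = n)
    (haH : Hurwitz a) (hbH : Hurwitz b)
    (hcd : c.natDegree = n - 1)
    (hhM : h.Monic) (hhd : h.natDegree = n)
    (hpa : ∀ ω : ℝ, 0 < (evalI c ω / evalI a ω).re)
    (hpb : ∀ ω : ℝ, 0 < (evalI c ω / evalI b ω).re) :
    ∃ δ₀ > (0 : ℝ), ∀ δ : ℝ, 0 < δ → δ < δ₀ →
      SPR (c + δ • h) a ∧ SPR (c + δ • h) b := by
  have hc : c.degree < n :=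
    (degree_le_natDegree).trans_lt (by rw [hcd]; exact_mod_cast Nat.sub_lt hn one_pos)
  have hdeg {q : ℝ[X]} (hq : q.Monic) (hqn : q.natDegree = n) : c.degree < q.degree := by
    rwa [degree_eq_natDegree hq.ne_zero, hqn]
  have hSPR := (eventually_SPR_add_smul hhM haM (hhd.trans hna.symm) (hdeg haM hna) haH hpa).and
    (eventually_SPR_add_smul hhM hbM (hhd.trans hnb.symm) (hdeg hbM hnb) hbH hpb)
  obtain ⟨δ₀, hδ₀, hsub⟩ := mem_nhdsGT_iff_exists_Ioo_subset.mp hSPR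
  exact ⟨δ₀, hδ₀, fun δ h0 h1 => hsub ⟨h0, h1⟩⟩

theorem stmt_6 (n : ℕ) (hn : 1 ≤ n) (a b c h : Polynomial ℝ)
    (haM : a.Monic) (hbM : b.Monic)
    (hna : a.natDegree = n) (hnb : b.natDegree = n)
    (haH : Hurwitz a) (hbH : Hurwitz b)
    (hcM : c.Monic) (hcd : c.natDegree = n - 1)
    (hhM : h.Monic) (hhd : h.natDegree = n)
    (hpa : ∀ ω : ℝ, 0 < (evalI c ω / evalI a ω).re)
    (hpb : ∀ ω : ℝ, 0 < (evalI c ω / evalI b ω).re) :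
    ∃ δ₀ > (0 : ℝ), ∀ δ : ℝ, 0 < δ → δ < δ₀ →
      SPR (c + δ • h) a ∧ SPR (c + δ • h) b :=
  stmt_6_general n hn a b c h haM hbM hna hnb haH hbH hcd hhM hhd hpa hpb
end

section
/- Let a be a monic real Hurwitz polynomial of degree n ≥ 3 with coefficients a₁,…,a_n. Fix k ∈ {1,…,n−2}, and define c_l = Σ_j (−1)^{l+j} a_j x_{2l−j−1} as linear functions of (x₁,…,x_{n−1}) (with a₀ = x₀ = 1, out-of-range indices giving 0). Then every point (x₁,…,x_{n−1}) satisfying c_{k+1}² − 4 c_k c_{k+2} < 0 and c_l = 0 for all l ∉ {k, k+1, k+2} has all coordinates x_i nonnegative, i = 1,…,n−1. -/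
open Polynomial

/-!
Put `p(s) = s^(n-1) + x₁ s^(n-2) + ⋯ + x_(n-1)`. Expanding, `Re (p(iω) · conj (a(iω)))` is
`∑ₘ c_(n-m) ω^(2m)`, which by the vanishing hypotheses is
`ω^(2(n-k-2)) (c_k ω⁴ + c_(k+1) ω² + c_(k+2))` and so, the discriminant being negative, has the
constant sign of `c_k`. Hence `c_k p / a` has nonnegative real part on the imaginary axis. As `a` is
Hurwitz and `deg p < deg a`, the Phragmén–Lindelöf principle applied to `exp (-c_k p / a)` carries
this over to the closed right half-plane, and the open mapping theorem then rules out zeros of `p`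
with positive real part. A monic real polynomial whose roots all lie in the closed left half-plane
is a product of factors `s + r` and `s² + b s + c` with `r, b, c ≥ 0`, so the coefficients `x_i`
of `p` are nonnegative.
-/

open Complex Filter Finset Topology Bornology
open scoped ComplexConjugate

namespace Polynomial

theorem coeff_mul_nonneg {R : Type*} [Semiring R] [PartialOrder R] [IsOrderedRing R]
    {p q : R[X]} (hp : ∀ m, 0 ≤ p.coeff m) (hq : ∀ m, 0 ≤ q.coeff m) (m : ℕ) :
    0 ≤ (p * q).coeff m := by
  rw [coeff_mul]
  exact Finset.sum_nonneg fun _ _ ↦ mul_nonneg (hp _) (hq _)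

theorem exists_monic_dvd_coeff_nonneg_of_aeval_eq_zero {p : ℝ[X]} {z : ℂ} (hz : aeval z p = 0)
    (hre : z.re ≤ 0) :
    ∃ f : ℝ[X], f.Monic ∧ 0 < f.natDegree ∧ f ∣ p ∧ ∀ m, 0 ≤ f.coeff m := by
  rcases eq_or_ne z.im 0 with him | him
  · have hzre : (z.re : ℂ) = z := Complex.ext rfl him.symm
    refine ⟨X - C z.re, monic_X_sub_C _, by simp, dvd_iff_isRoot.mpr ?_, fun m ↦ ?_⟩
    · have := aeval_algebraMap_apply ℂ z.re p
      rw [Complex.coe_algebraMap, hzre, hz] at this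
      exact_mod_cast this.symm
    · rcases m with _ | _ | m <;> simp [coeff_X, coeff_C, hre]
  · have hdeg : (X ^ 2 - C (2 * z.re) * X + C (‖z‖ ^ 2)).natDegree = 2 := by compute_degree!
    refine ⟨_, by monicity!, by rw [hdeg]; exact two_pos,
      quadratic_dvd_of_aeval_eq_zero_im_ne_zero p hz him, fun m ↦ ?_⟩
    have h2re : 2 * z.re ≤ 0 := by linarith
    simp only [coeff_add, coeff_sub, coeff_C_mul, coeff_X, coeff_X_pow, coeff_C]
    rcases m with _ | _ | _ | m <;> simp [h2re]

theorem Monic.coeff_nonneg_of_forall_aeval_eq_zero {p : ℝ[X]} (hp : p.Monic)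
    (hroots : ∀ z : ℂ, aeval z p = 0 → z.re ≤ 0) (m : ℕ) : 0 ≤ p.coeff m := by
  induction h : p.natDegree using Nat.strong_induction_on generalizing p m with
  | _ N ih =>
  rcases Nat.eq_zero_or_pos N with rfl | hN
  · rw [hp.natDegree_eq_zero.mp h, coeff_one]
    positivity
  obtain ⟨z, hz⟩ := IsAlgClosed.exists_aeval_eq_zero ℂ p (by
    rw [degree_eq_natDegree hp.ne_zero, h]; exact_mod_cast hN.ne')
  obtain ⟨f, hfM, hfdeg, ⟨q, rfl⟩, hf⟩ :=
    exists_monic_dvd_coeff_nonneg_of_aeval_eq_zero hz (hroots z hz)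
  have hqM : q.Monic := hfM.of_mul_monic_left hp
  have hq : ∀ m, 0 ≤ q.coeff m := fun m ↦
    ih q.natDegree (by rw [← h, hfM.natDegree_mul hqM]; omega) hqM
      (fun w hw ↦ hroots w (by rw [map_mul, hw, mul_zero])) m rfl
  exact coeff_mul_nonneg hf hq m

end Polynomial

theorem AnalyticAt.eventually_eq_zero_of_re_nonneg {F : ℂ → ℂ} {z : ℂ} (hF : AnalyticAt ℂ F z)
    (h0 : F z = 0) (hre : ∀ᶠ w in 𝓝 z, 0 ≤ (F w).re) : ∀ᶠ w in 𝓝 z, F w = 0 := by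
  rcases hF.eventually_constant_or_nhds_le_map_nhds with hconst | hopen
  · simpa only [h0] using hconst
  · have hnear : ∀ᶠ v in 𝓝 (0 : ℂ), 0 ≤ v.re := h0 ▸ hopen hre
    have hneg : Tendsto (fun t : ℝ ↦ -(t : ℂ)) (𝓝[>] 0) (𝓝 0) := by
      refine tendsto_nhdsWithin_of_tendsto_nhds ?_
      simpa using (continuous_ofReal.tendsto 0).neg
    obtain ⟨t, ht, hpos⟩ := ((hneg.eventually hnear).and self_mem_nhdsWithin).exists
    simp only [neg_re, ofReal_re, Left.nonneg_neg_iff] at ht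
    exact absurd hpos (not_lt.mpr ht)

namespace Polynomial

variable {P A : ℂ[X]}

theorem re_div_nonneg_of_forall_imaginaryAxis (hdeg : P.degree < A.degree)
    (hA : ∀ z : ℂ, 0 ≤ z.re → A.eval z ≠ 0)
    (him : ∀ y : ℝ, 0 ≤ (P.eval (y * I) / A.eval (y * I)).re) {z : ℂ} (hz : 0 ≤ z.re) :
    0 ≤ (P.eval z / A.eval z).re := by
  set F : ℂ → ℂ := fun w ↦ P.eval w / A.eval w
  have hlim : Tendsto (fun w ↦ exp (-F w)) (cobounded ℂ) (𝓝 1) := by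
    simpa using ((isLittleO_cobounded_of_degree_lt hdeg).tendsto_div_nhds_zero.neg).cexp
  have hnorm : ∀ w, ‖exp (-F w)‖ ≤ 1 ↔ 0 ≤ (F w).re := fun w ↦ by
    rw [norm_exp, Real.exp_le_one_iff, neg_re, neg_nonpos]
  refine (hnorm z).mp <| PhragmenLindelof.right_half_plane_of_bounded_on_real
    (f := fun w ↦ exp (-F w)) ?_ ⟨0, two_pos, 0, ?_⟩ ?_ (fun y ↦ (hnorm _).mpr (him y)) hz
  · refine DifferentiableOn.diffContOnCl fun w hw ↦ ?_
    rw [closure_setOfPred_lt_re] at hw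
    exact (P.differentiableAt.div A.differentiableAt (hA w hw)).neg.cexp.differentiableWithinAt
  · simpa using (hlim.isBigO_one ℝ).mono inf_le_left
  · refine (hlim.comp ?_).norm.isBoundedUnder_le
    rw [← tendsto_norm_atTop_iff_cobounded]
    simpa using tendsto_abs_atTop_atTop

theorem re_le_zero_of_isRoot (hP : P ≠ 0) (hA : ∀ z : ℂ, 0 ≤ z.re → A.eval z ≠ 0)
    (hre : ∀ z : ℂ, 0 ≤ z.re → 0 ≤ (P.eval z / A.eval z).re) {z : ℂ} (hz : P.IsRoot z) :
    z.re ≤ 0 := by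
  by_contra! hpos
  have hnear : ∀ᶠ w in 𝓝 z, 0 < w.re := continuousAt_const.eventually_lt
    continuous_re.continuousAt hpos
  have hF : AnalyticAt ℂ (fun w ↦ P.eval w / A.eval w) z :=
    (AnalyticOnNhd.eval_polynomial P z trivial).div (AnalyticOnNhd.eval_polynomial A z trivial)
      (hA z hpos.le)
  have hzero := hF.eventually_eq_zero_of_re_nonneg (by simp [hz.eq_zero])
    (hnear.mono fun w hw ↦ hre w hw.le)
  have hroots : ∀ᶠ w in 𝓝 z, P.IsRoot w := (hzero.and hnear).mono fun w ⟨hw, hwre⟩ ↦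
    (div_eq_zero_iff.mp hw).resolve_right (hA w hwre.le)
  exact hP (eq_zero_of_infinite_isRoot P (infinite_of_mem_nhds z hroots))

end Polynomial

theorem Hurwitz.re_le_zero_of_aeval_eq_zero {a p : ℝ[X]} (ha : Hurwitz a)
    (hdeg : p.degree < a.degree) (hp : p ≠ 0)
    (him : ∀ ω : ℝ, 0 ≤ (evalI p ω * conj (evalI a ω)).re) {z : ℂ} (hz : aeval z p = 0) :
    z.re ≤ 0 := by
  have hA : ∀ w : ℂ, 0 ≤ w.re → (a.map (algebraMap ℝ ℂ)).eval w ≠ 0 :=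
    fun w hw h ↦ (ha w h).not_ge hw
  refine re_le_zero_of_isRoot (P := p.map (algebraMap ℝ ℂ))
    ((Polynomial.map_ne_zero_iff (algebraMap ℝ ℂ).injective).2 hp) hA
    (fun w hw ↦ re_div_nonneg_of_forall_imaginaryAxis (by rwa [degree_map, degree_map]) hA
      (fun y ↦ ?_) hw) (by rwa [IsRoot, eval_map_algebraMap])
  rw [eval_map_algebraMap, eval_map_algebraMap, div_eq_mul_inv, inv_def, ← mul_assoc,
    re_mul_ofReal]
  exact mul_nonneg (him y) (inv_nonneg.2 (normSq_nonneg _))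

theorem sum_range_two_mul {M : Type*} [AddCommMonoid M] (f : ℕ → M) (N : ℕ) :
    ∑ i ∈ range (2 * N), f i = ∑ m ∈ range N, (f (2 * m) + f (2 * m + 1)) := by
  induction N with
  | zero => simp
  | succ N ih => rw [mul_add_one, sum_range_succ, sum_range_succ, sum_range_succ, ih, add_assoc]

theorem re_evalI (q : ℝ[X]) {N : ℕ} (hq : q.natDegree < 2 * N) (ω : ℝ) :
    (evalI q ω).re = ∑ m ∈ range N, (-1) ^ m * q.coeff (2 * m) * (ω ^ 2) ^ m := by
  rw [evalI, aeval_eq_sum_range' hq, re_sum, sum_range_two_mul]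
  have hsq : ((ω : ℂ) * I) ^ 2 = ((-ω ^ 2 : ℝ) : ℂ) := by
    push_cast
    rw [mul_pow, I_sq, mul_neg_one]
  refine sum_congr rfl fun m _ ↦ ?_
  rw [pow_succ, pow_mul, hsq, Algebra.smul_def, Algebra.smul_def, ← ofReal_pow]
  simp only [Complex.coe_algebraMap, ← ofReal_mul, mul_re, ofReal_re, ofReal_im,
    I_re, I_im]
  ring

theorem evalI_C_mul (c : ℝ) (p : ℝ[X]) (ω : ℝ) : evalI (C c * p) ω = c * evalI p ω := by
  simp [evalI]

theorem evalI_X_pow_mul (p : ℝ[X]) (d : ℕ) (ω : ℝ) :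
    evalI (X ^ d * p) ω = ((ω : ℂ) * I) ^ d * evalI p ω := by
  simp [evalI]

theorem re_evalI_mul_conj_s7 (p a : ℝ[X]) {n : ℕ} (ha : a.natDegree ≤ n) (ω : ℝ) :
    (evalI p ω * conj (evalI a ω)).re =
      ∑ d ∈ range (n + 1), (-1) ^ d * a.coeff d * (evalI (X ^ d * p) ω).re := by
  rw [evalI.eq_1 a, aeval_eq_sum_range' (Nat.lt_succ_of_le ha), map_sum, mul_sum, re_sum]
  refine sum_congr rfl fun d _ ↦ ?_
  have hconj : conj ((ω : ℂ) * I) = -((ω : ℂ) * I) := by simp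
  rw [evalI_X_pow_mul, Algebra.smul_def, map_mul, map_pow, hconj, neg_pow, Complex.coe_algebraMap,
    conj_ofReal, ← re_ofReal_mul]
  congr 1
  push_cast
  ring

noncomputable def descPoly (n : ℕ) (x : ℤ → ℝ) : ℝ[X] :=
  ∑ e ∈ range n, C (x (n - 1 - e)) * X ^ e

def imagAxisCoeff (a : ℝ[X]) (n : ℕ) (x : ℤ → ℝ) (l : ℕ) : ℝ :=
  ∑ j ∈ range (n + 1), (-1) ^ (l + j) * a.coeff (n - j) * x (2 * l - j - 1)

section descPoly

variable {n : ℕ} {x : ℤ → ℝ}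

theorem coeff_descPoly (hx : ∀ m : ℤ, m < 0 → x m = 0) (e : ℕ) :
    (descPoly n x).coeff e = x (n - 1 - e) := by
  simp only [descPoly, finsetSum_coeff, coeff_C_mul_X_pow, sum_ite_eq, mem_range]
  split_ifs with he
  · rfl
  · exact (hx _ (by omega)).symm

theorem natDegree_descPoly_le : (descPoly n x).natDegree ≤ n - 1 :=
  natDegree_sum_le_of_forall_le _ _ fun e he ↦
    (natDegree_C_mul_X_pow_le _ _).trans (by have := mem_range.mp he; omega)

theorem monic_descPoly (hn : 0 < n) (hx0 : x 0 = 1) (hx : ∀ m : ℤ, m < 0 → x m = 0) :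
    (descPoly n x).Monic :=
  monic_of_natDegree_le_of_coeff_eq_one _ natDegree_descPoly_le <| by
    rw [coeff_descPoly hx, ← hx0]
    congr 1
    omega

theorem coeff_X_pow_mul_descPoly (hx : ∀ m : ℤ, m < 0 ∨ n - 1 < m → x m = 0) (d j : ℕ) :
    (X ^ d * descPoly n x).coeff j = x (n - 1 - j + d) := by
  rw [coeff_X_pow_mul', coeff_descPoly fun m hm ↦ hx m (.inl hm)]
  split_ifs with hd
  · congr 1
    omega
  · exact (hx _ (.inr (by omega))).symm

theorem re_evalI_descPoly_mul_conj {a : ℝ[X]} (ha : a.natDegree ≤ n)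
    (hx : ∀ m : ℤ, m < 0 ∨ n - 1 < m → x m = 0) (ω : ℝ) :
    (evalI (descPoly n x) ω * conj (evalI a ω)).re =
      ∑ m ∈ range n, imagAxisCoeff a n x (n - m) * (ω ^ 2) ^ m := by
  rcases n.eq_zero_or_pos with rfl | hn
  · simp [descPoly, evalI]
  have hdeg : ∀ d ∈ range (n + 1), (X ^ d * descPoly n x).natDegree < 2 * n := fun d hd ↦
    calc (X ^ d * descPoly n x).natDegree ≤ d + (n - 1) :=
          natDegree_mul_le_of_le (natDegree_X_pow_le d) natDegree_descPoly_le
      _ < 2 * n := by have := mem_range.mp hd; omega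
  rw [re_evalI_mul_conj_s7 _ _ ha, sum_congr rfl fun d hd ↦ by rw [re_evalI _ (hdeg d hd)]]
  simp_rw [mul_sum, coeff_X_pow_mul_descPoly hx]
  rw [sum_comm]
  refine sum_congr rfl fun m hm ↦ ?_
  rw [imagAxisCoeff, sum_mul, ← sum_range_reflect]
  refine sum_congr rfl fun d hd ↦ ?_
  have hmn := mem_range.mp hm
  have hdn := mem_range.mp hd
  have hsign : (-1 : ℝ) ^ (n - m + d) = (-1) ^ (n - d) * (-1) ^ m := by
    rw [← pow_add, neg_one_pow_eq_pow_mod_two, show (n - m + d) % 2 = (n - d + m) % 2 by omega,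
      ← neg_one_pow_eq_pow_mod_two]
  rw [hsign, show n + 1 - 1 - d = n - d by omega,
    show (n : ℤ) - 1 - ↑(2 * m) + ↑(n - d) = 2 * ↑(n - m) - d - 1 by omega]
  ring

end descPoly

theorem sum_range_sub_mul_pow_eq {c : ℕ → ℝ} {n k : ℕ} (hk1 : 1 ≤ k) (hk2 : k + 2 ≤ n)
    (hzero : ∀ l, 1 ≤ l → l ≤ n → l ≠ k → l ≠ k + 1 → l ≠ k + 2 → c l = 0) (t : ℝ) :
    ∑ m ∈ range n, c (n - m) * t ^ m =
      t ^ (n - (k + 2)) * (c k * t ^ 2 + c (k + 1) * t + c (k + 2)) := by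
  have hsub : {n - (k + 2), n - (k + 1), n - k} ⊆ range n := by
    intro m hm
    simp only [mem_insert, mem_singleton, mem_range] at hm ⊢
    omega
  rw [← sum_subset hsub fun m hm hnot ↦ ?_]
  · rw [sum_insert (by simp; omega), sum_insert (by simp; omega), sum_singleton,
      show n - (n - (k + 2)) = k + 2 by omega, show n - (n - (k + 1)) = k + 1 by omega,
      show n - (n - k) = k by omega, show n - (k + 1) = n - (k + 2) + 1 by omega,
      show n - k = n - (k + 2) + 2 by omega]
    ring
  · simp only [mem_insert, mem_singleton, mem_range, not_or] at hm hnot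
    rw [hzero (n - m) (by omega) (by omega) (by omega) (by omega) (by omega), zero_mul]

theorem stmt_7_general (n : ℕ) (a : Polynomial ℝ)
    (had : a.natDegree = n) (haH : Hurwitz a)
    (k : ℕ) (hk1 : 1 ≤ k) (hk2 : k ≤ n - 2)
    (x : ℤ → ℝ) (hx0 : x 0 = 1)
    (hxout : ∀ m : ℤ, m < 0 ∨ (n : ℤ) - 1 < m → x m = 0)
    (cl : ℕ → ℝ)
    (hcl : ∀ l : ℕ, cl l = ∑ j ∈ Finset.range (n + 1),
        (-1 : ℝ) ^ (l + j) * a.coeff (n - j) * x (2 * (l : ℤ) - (j : ℤ) - 1))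
    (hell : (cl (k + 1)) ^ 2 - 4 * cl k * cl (k + 2) < 0)
    (hzero : ∀ l : ℕ, 1 ≤ l → l ≤ n → l ≠ k → l ≠ k + 1 → l ≠ k + 2 → cl l = 0) :
    ∀ i : ℕ, 1 ≤ i → i ≤ n - 1 → 0 ≤ x (i : ℤ) := by
  obtain rfl : cl = imagAxisCoeff a n x := funext hcl
  set c := imagAxisCoeff a n x
  have hxneg : ∀ m : ℤ, m < 0 → x m = 0 := fun m hm ↦ hxout m (.inl hm)
  have hck : c k ≠ 0 := by
    intro h
    rw [h] at hell
    nlinarith [sq_nonneg (c (k + 1))]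
  have hmonic : (descPoly n x).Monic := monic_descPoly (by omega) hx0 hxneg
  have him : ∀ ω : ℝ, 0 ≤ (evalI (C (c k) * descPoly n x) ω * conj (evalI a ω)).re := by
    intro ω
    rw [evalI_C_mul, mul_assoc, re_ofReal_mul, re_evalI_descPoly_mul_conj had.le hxout,
      sum_range_sub_mul_pow_eq hk1 (by omega) hzero, mul_left_comm]
    exact mul_nonneg (pow_nonneg (sq_nonneg ω) _)
      (by nlinarith [sq_nonneg (2 * c k * ω ^ 2 + c (k + 1))])
  have hdeg : (C (c k) * descPoly n x).degree < a.degree := by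
    rw [degree_C_mul hck]
    exact degree_lt_degree (natDegree_descPoly_le.trans_lt (by omega))
  have hroots (z : ℂ) (hz : aeval z (descPoly n x) = 0) : z.re ≤ 0 :=
    haH.re_le_zero_of_aeval_eq_zero hdeg (mul_ne_zero (C_ne_zero.2 hck) hmonic.ne_zero) him
      (by rw [map_mul, hz, mul_zero])
  intro i hi1 hi2
  have := hmonic.coeff_nonneg_of_forall_aeval_eq_zero hroots (n - 1 - i)
  rwa [coeff_descPoly hxneg, show (n : ℤ) - 1 - ↑(n - 1 - i) = i by omega] at this

theorem stmt_7 (n : ℕ) (hn : 3 ≤ n) (a : Polynomial ℝ)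
    (haM : a.Monic) (had : a.natDegree = n) (haH : Hurwitz a)
    (k : ℕ) (hk1 : 1 ≤ k) (hk2 : k ≤ n - 2)
    (x : ℤ → ℝ) (hx0 : x 0 = 1)
    (hxout : ∀ m : ℤ, m < 0 ∨ (n : ℤ) - 1 < m → x m = 0)
    (cl : ℕ → ℝ)
    (hcl : ∀ l : ℕ, cl l = ∑ j ∈ Finset.range (n + 1),
        (-1 : ℝ) ^ (l + j) * a.coeff (n - j) * x (2 * (l : ℤ) - (j : ℤ) - 1))
    (hell : (cl (k + 1)) ^ 2 - 4 * cl k * cl (k + 2) < 0)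
    (hzero : ∀ l : ℕ, 1 ≤ l → l ≤ n → l ≠ k → l ≠ k + 1 → l ≠ k + 2 → cl l = 0) :
    ∀ i : ℕ, 1 ≤ i → i ≤ n - 1 → 0 ≤ x (i : ℤ) :=
  stmt_7_general n a had haH k hk1 hk2 x hx0 hxout cl hcl hell hzero
end

section
/- Let a(s) = s³ + a₁s² + a₂s + a₃ be a monic Hurwitz polynomial of degree 3. Then the set of (x₁, x₂) ∈ ℝ² satisfying (a₂x₁ − a₁x₂ − a₃)² − 4(a₁ − x₁)(a₃x₂) < 0 is nonempty, and every point in it satisfies x₁ > 0 and x₂ > 0 and x₁ < a₁. -/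
open Polynomial

lemma cubic_root_complex (a₁ a₂ a₃ : ℝ) (w : ℂ)
    (hw : w ^ 3 + a₁ * w ^ 2 + a₂ * w + a₃ = 0) :
    ((X ^ 3 + C a₁ * X ^ 2 + C a₂ * X + C a₃ : ℝ[X]).map (algebraMap ℝ ℂ)).IsRoot w := by
  simp only [IsRoot, Polynomial.map_add, Polynomial.map_mul, Polynomial.map_pow,
    Polynomial.map_C, Polynomial.map_X, eval_add, eval_mul, eval_pow, eval_C, eval_X]
  simpa using hw

lemma cubic_real_root (a₁ a₂ a₃ : ℝ) :
    ∃ r : ℝ, r ^ 3 + a₁ * r ^ 2 + a₂ * r + a₃ = 0 := by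
  set M : ℝ := 1 + |a₁| + |a₂| + |a₃| with hM
  have hM1 : 1 ≤ M := by
    have := abs_nonneg a₁; have := abs_nonneg a₂; have := abs_nonneg a₃
    rw [hM]; linarith
  have hfM : 0 < M ^ 3 + a₁ * M ^ 2 + a₂ * M + a₃ := by
    nlinarith [abs_nonneg a₁, abs_nonneg a₂, abs_nonneg a₃, neg_abs_le a₁, neg_abs_le a₂,
      neg_abs_le a₃, sq_nonneg M, sq_nonneg (M - 1)]
  have hfm : (-M) ^ 3 + a₁ * (-M) ^ 2 + a₂ * (-M) + a₃ < 0 := by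
    nlinarith [abs_nonneg a₁, abs_nonneg a₂, abs_nonneg a₃, le_abs_self a₁, le_abs_self a₂,
      le_abs_self a₃, neg_abs_le a₂, le_abs_self a₃, sq_nonneg M, sq_nonneg (M - 1)]
  have hc : ContinuousOn (fun t : ℝ => t ^ 3 + a₁ * t ^ 2 + a₂ * t + a₃) (Set.Icc (-M) M) := by
    fun_prop
  obtain ⟨r, _, hr⟩ := intermediate_value_Icc (by linarith : (-M : ℝ) ≤ M) hc
    ⟨le_of_lt hfm, le_of_lt hfM⟩
  exact ⟨r, hr⟩

lemma hurwitz_coeffs (a₁ a₂ a₃ : ℝ)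
    (ha : Hurwitz (X ^ 3 + C a₁ * X ^ 2 + C a₂ * X + C a₃)) :
    0 < a₁ ∧ 0 < a₃ ∧ a₃ < a₁ * a₂ := by
  obtain ⟨r, hr⟩ := cubic_real_root a₁ a₂ a₃
  have hrC : (r : ℂ) ^ 3 + a₁ * (r : ℂ) ^ 2 + a₂ * r + a₃ = 0 := by
    exact_mod_cast congrArg (fun t : ℝ => (t : ℂ)) hr
  have hrneg : r < 0 := by simpa using ha r (cubic_root_complex a₁ a₂ a₃ r hrC)
  set b : ℝ := a₁ + r with hb
  set c : ℝ := a₂ + a₁ * r + r ^ 2 with hc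
  have ha₃ : a₃ = -(r * c) := by rw [hc]; nlinarith [hr]
  have hA1 : (a₁ : ℂ) = (b : ℂ) - r := by rw [hb]; push_cast; ring
  have hA2 : (a₂ : ℂ) = (c : ℂ) - b * r := by rw [hc, hb]; push_cast; ring
  have hA3 : (a₃ : ℂ) = -((r : ℂ) * c) := by rw [ha₃]; push_cast; ring
  have hdeg : (0 : WithBot ℕ) < (X ^ 2 + C (b : ℂ) * X + C (c : ℂ)).degree := by
    have h2 : (X ^ 2 + C (b : ℂ) * X + C (c : ℂ)).degree = 2 := by
      have := Polynomial.degree_quadratic (one_ne_zero : (1 : ℂ) ≠ 0)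
        (b := (b : ℂ)) (c := (c : ℂ))
      simpa using this
    rw [h2]; norm_num
  obtain ⟨w, hw⟩ := Complex.exists_root hdeg
  have hw' : w ^ 2 + b * w + c = 0 := by
    simpa [IsRoot] using hw
  set w' : ℂ := -b - w with hwdef
  have hw'2 : w' ^ 2 + b * w' + c = 0 := by
    rw [hwdef]; linear_combination hw'
  have hrootw : (w : ℂ) ^ 3 + a₁ * w ^ 2 + a₂ * w + a₃ = 0 := by
    linear_combination (w - (r : ℂ)) * hw' + w ^ 2 * hA1 + w * hA2 + hA3
  have hrootw' : (w' : ℂ) ^ 3 + a₁ * w' ^ 2 + a₂ * w' + a₃ = 0 := by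
    linear_combination (w' - (r : ℂ)) * hw'2 + w' ^ 2 * hA1 + w' * hA2 + hA3
  have hwre : w.re < 0 := ha w (cubic_root_complex a₁ a₂ a₃ w hrootw)
  have hw're : w'.re < 0 := ha w' (cubic_root_complex a₁ a₂ a₃ w' hrootw')
  have hw'r : w'.re = -b - w.re := by rw [hwdef]; simp
  have hbpos : 0 < b := by rw [hwdef] at hw're; simp at hw're; linarith
  have hcprod : (c : ℂ) = w * w' := by
    rw [hwdef]; linear_combination hw'
  have hcim : w'.im = -w.im := by rw [hwdef]; simp
  have hcre : c = w.re * w'.re + w.im ^ 2 := by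
    have h := congrArg Complex.re hcprod
    simp only [Complex.ofReal_re, Complex.mul_re, hcim] at h
    rw [h]; ring
  have hcpos : 0 < c := by rw [hcre]; nlinarith
  refine ⟨by rw [hb] at hbpos; linarith, by rw [ha₃]; nlinarith, ?_⟩
  have key : a₁ * a₂ - a₃ = b * (c - b * r + r ^ 2) := by
    rw [ha₃, hb, hc]; ring
  nlinarith [key, mul_pos hbpos hcpos, mul_pos hbpos (mul_pos hbpos (neg_pos.2 hrneg)),
    mul_pos hbpos (mul_pos (neg_pos.2 hrneg) (neg_pos.2 hrneg))]

theorem stmt_8 (a₁ a₂ a₃ : ℝ)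
    (ha : Hurwitz (X ^ 3 + C a₁ * X ^ 2 + C a₂ * X + C a₃)) :
    (∃ x₁ x₂ : ℝ, (a₂ * x₁ - a₁ * x₂ - a₃) ^ 2 - 4 * (a₁ - x₁) * (a₃ * x₂) < 0) ∧
    ∀ x₁ x₂ : ℝ, (a₂ * x₁ - a₁ * x₂ - a₃) ^ 2 - 4 * (a₁ - x₁) * (a₃ * x₂) < 0 →
      0 < x₁ ∧ 0 < x₂ ∧ x₁ < a₁ := by
  obtain ⟨h1, h3, h12⟩ := hurwitz_coeffs a₁ a₂ a₃ ha
  have h2 : 0 < a₂ := by nlinarith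
  constructor
  · refine ⟨a₃ / a₂, 2 * (a₁ * a₂ - a₃) * a₃ / (a₂ * a₁ ^ 2), ?_⟩
    have ha₂ : a₂ ≠ 0 := ne_of_gt h2
    have ha₁ : a₁ ≠ 0 := ne_of_gt h1
    have key : (a₂ * (a₃ / a₂) - a₁ * (2 * (a₁ * a₂ - a₃) * a₃ / (a₂ * a₁ ^ 2)) - a₃) ^ 2
        - 4 * (a₁ - a₃ / a₂) * (a₃ * (2 * (a₁ * a₂ - a₃) * a₃ / (a₂ * a₁ ^ 2)))
        = -(2 * (a₁ * a₂ - a₃) * a₃ / (a₂ * a₁)) ^ 2 := by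
      field_simp
      ring
    rw [key]
    have h12' : 0 < a₁ * a₂ - a₃ := by linarith
    have : 0 < 2 * (a₁ * a₂ - a₃) * a₃ / (a₂ * a₁) :=
      div_pos (by positivity) (by positivity)
    nlinarith [this]
  · intro x₁ x₂ hx
    have key : 4 * a₁ ^ 2 * ((a₂ * x₁ - a₁ * x₂ - a₃) ^ 2 - 4 * (a₁ - x₁) * (a₃ * x₂)) =
        (2 * a₁ ^ 2 * x₂ - 2 * a₁ * (a₂ * x₁ - a₃) - 4 * (a₁ - x₁) * a₃) ^ 2
          - 16 * (a₁ - x₁) * a₃ * x₁ * (a₁ * a₂ - a₃) := by ring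
    have h12' : 0 < a₁ * a₂ - a₃ := by linarith
    have hprod : 0 < (a₁ - x₁) * x₁ := by
      by_contra hcon
      push_neg at hcon
      nlinarith [sq_nonneg (2 * a₁ ^ 2 * x₂ - 2 * a₁ * (a₂ * x₁ - a₃) - 4 * (a₁ - x₁) * a₃),
        mul_pos h1 h1, mul_pos h3 h12', mul_nonneg (mul_pos h3 h12').le (neg_nonneg.2 hcon)]
    have hx₁ : 0 < x₁ := by nlinarith
    have hx₁' : x₁ < a₁ := by nlinarith
    refine ⟨hx₁, ?_, hx₁'⟩
    nlinarith [sq_nonneg (a₂ * x₁ - a₁ * x₂ - a₃), mul_pos (sub_pos.2 hx₁') h3]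
end
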